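/- arXiv:1807.05654 — 2 statements merged into one kernel-verified Lean document; each statement's English description precedes it below -/
import Mathlib

section
/- If f is analytic in the unit disk with f(0) = 1 and f is subordinate to F(z) = exp(αz/(1-z)) for some α > 0, then |f''(0)/2| ≤ α(α+2)/2. -/
/-!
Put `ψ = φ / (1 - φ)`, so that `f = exp (α ψ)` near `0` and
`f''(0) = α² ψ'(0)² + α ψ''(0)`. Since `‖φ‖ < 1`, the function `p = 1 + 2ψ = (1 + φ) / (1 - φ)`
has nonnegative real part and `p 0 = 1`, so Carathéodory's inequality
`‖p⁽ⁿ⁾(0)‖ ≤ 2 n! Re p(0)` gives `‖ψ'(0)‖ ≤ 1` and `‖ψ''(0)‖ ≤ 2`.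

Carathéodory's inequality comes from the Cauchy formula
`p⁽ⁿ⁾(c) = n! · avg_{|z - c| = r} (z - c)⁻ⁿ p(z)`: for `n ≥ 1` the same average of
`(z - c)⁻ⁿ conj (p z)` vanishes, so `p` may be replaced by `2 Re p ≥ 0`, whose average is
`2 Re p(c)`; let `r → 1`.
-/

open Metric Complex Real ComplexConjugate Filter Topology

variable {c : ℂ} {r : ℝ}

theorem norm_circleAverage_le_circleAverage_norm {E : Type*} [NormedAddCommGroup E]
    [NormedSpace ℝ E] (f : ℂ → E) :
    ‖circleAverage f c r‖ ≤ circleAverage (‖f ·‖) c r := by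
  rw [circleAverage_def, circleAverage_def, norm_smul, smul_eq_mul,
    Real.norm_of_nonneg (by positivity)]
  gcongr
  exact intervalIntegral.norm_integral_le_integral_norm two_pi_pos.le

theorem iteratedDeriv_eq_factorial_mul_circleAverage {p : ℂ → ℂ} (hr : 0 < r)
    (hp : DiffContOnCl ℂ p (ball c r)) (n : ℕ) :
    iteratedDeriv n p c = n.factorial * circleAverage (fun z ↦ ((z - c) ^ n)⁻¹ * p z) c r := by
  have hCauchy := hp.circleIntegral_one_div_sub_center_pow_smul hr n
  have hintegrand : (fun z ↦ (z - c)⁻¹ • (((z - c) ^ n)⁻¹ * p z)) =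
      fun z ↦ (1 / (z - c) ^ (n + 1)) • p z := by
    ext z
    rw [smul_eq_mul, smul_eq_mul, pow_succ, one_div, mul_inv]
    ring
  rw [circleAverage_eq_circleIntegral hr.ne', hintegrand, hCauchy, smul_smul, smul_eq_mul,
    ← mul_assoc]
  field_simp [two_pi_I_ne_zero, Nat.factorial_ne_zero]

theorem circleAverage_conj (f : ℂ → ℂ) :
    circleAverage (fun z ↦ conj (f z)) c r = conj (circleAverage f c r) := by
  simp [circleAverage_def, intervalIntegral.intervalIntegral_conj, map_ofNat]

theorem circleAverage_inv_pow_mul_conj_eq_zero {p : ℂ → ℂ} (hr : 0 < r)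
    (hp : DiffContOnCl ℂ p (ball c r)) {n : ℕ} (hn : n ≠ 0) :
    circleAverage (fun z ↦ ((z - c) ^ n)⁻¹ * conj (p z)) c r = 0 := by
  -- On the circle `(z - c)⁻¹ = conj (z - c) / r ^ 2`, so the integrand is the conjugate of a
  -- holomorphic function vanishing at `c`.
  have hsphere : Set.EqOn (fun z ↦ ((z - c) ^ n)⁻¹ * conj (p z))
      (fun z ↦ conj ((((r : ℂ) ^ 2) ^ n)⁻¹ • ((z - c) ^ n * p z))) (sphere c |r|) := by
    intro z hz
    rw [mem_sphere_iff_norm, abs_of_pos hr] at hz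
    simp only [smul_eq_mul, inv_def ((z - c) ^ n), map_mul, map_inv₀, map_pow, conj_ofReal,
      normSq_eq_norm_sq, hz]
    push_cast
    ring
  have hmean : circleAverage (fun z ↦ (z - c) ^ n * p z) c r = 0 := by
    rw [DiffContOnCl.circleAverage, sub_self, zero_pow hn, zero_mul]
    rw [abs_of_pos hr]
    exact ((differentiable_id.sub_const c).pow n).diffContOnCl.smul hp
  rw [circleAverage_congr_sphere hsphere, circleAverage_conj, circleAverage_fun_smul, hmean,
    smul_zero, map_zero]

theorem DiffContOnCl.norm_iteratedDeriv_le_of_re_nonneg {p : ℂ → ℂ}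
    (hp : DiffContOnCl ℂ p (ball c r)) (hr : 0 < r) (hre : ∀ z ∈ sphere c r, 0 ≤ (p z).re)
    {n : ℕ} (hn : n ≠ 0) :
    ‖iteratedDeriv n p c‖ ≤ 2 * n.factorial * (p c).re / r ^ n := by
  have hpc : ContinuousOn p (sphere c r) := hp.continuousOn_ball.mono sphere_subset_closedBall
  have hkc : ContinuousOn (fun z ↦ ((z - c) ^ n)⁻¹) (sphere c r) :=
    ((continuousOn_id.sub continuousOn_const).pow n).inv₀ fun z hz ↦
      pow_ne_zero n (sub_ne_zero.2 (ne_of_mem_sphere hz hr.ne'))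
  have havg_re : Real.circleAverage (fun z ↦ ((z - c) ^ n)⁻¹ * p z) c r =
      Real.circleAverage (fun z ↦ ((z - c) ^ n)⁻¹ * ((2 * (p z).re : ℝ) : ℂ)) c r := by
    have hint₁ : CircleIntegrable (fun z ↦ ((z - c) ^ n)⁻¹ * p z) c r :=
      (hkc.mul hpc).circleIntegrable hr.le
    have hint₂ : CircleIntegrable (fun z ↦ ((z - c) ^ n)⁻¹ * conj (p z)) c r :=
      (hkc.mul (continuous_conj.comp_continuousOn hpc)).circleIntegrable hr.le
    rw [← add_zero (Real.circleAverage _ c r), ← circleAverage_inv_pow_mul_conj_eq_zero hr hp hn,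
      ← circleAverage_fun_add hint₁ hint₂]
    congr 1
    ext z
    rw [← mul_add, add_conj, ofReal_mul, ofReal_ofNat]
  have hnorm : Set.EqOn (fun z ↦ ‖((z - c) ^ n)⁻¹ * ((2 * (p z).re : ℝ) : ℂ)‖)
      (fun z ↦ (2 / r ^ n) • (p z).re) (sphere c |r|) := by
    intro z hz
    rw [abs_of_pos hr] at hz
    dsimp only
    rw [norm_mul, norm_inv, norm_pow, mem_sphere_iff_norm.1 hz, norm_real,
      Real.norm_of_nonneg (by linarith [hre z hz]), smul_eq_mul]
    ring
  have hmean : Real.circleAverage (fun z ↦ (p z).re) c r = (p c).re := by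
    rw [← abs_of_pos hr] at hp
    have := reCLM.circleAverage_comp_comm (hpc.circleIntegrable hr.le)
    simpa [Function.comp_def, hp.circleAverage] using this
  calc ‖iteratedDeriv n p c‖
      = n.factorial *
          ‖Real.circleAverage (fun z ↦ ((z - c) ^ n)⁻¹ * ((2 * (p z).re : ℝ) : ℂ)) c r‖ := by
        rw [iteratedDeriv_eq_factorial_mul_circleAverage hr hp, havg_re, norm_mul,
          Complex.norm_natCast]
    _ ≤ n.factorial * Real.circleAverage (fun z ↦ (2 / r ^ n) • (p z).re) c r := by
        gcongr
        exact (norm_circleAverage_le_circleAverage_norm _).trans_eq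
          (circleAverage_congr_sphere hnorm)
    _ = 2 * n.factorial * (p c).re / r ^ n := by
        rw [circleAverage_fun_smul, hmean, smul_eq_mul]
        ring

theorem DifferentiableOn.norm_iteratedDeriv_le_of_re_nonneg {p : ℂ → ℂ} {R : ℝ}
    (hp : DifferentiableOn ℂ p (ball c R)) (hR : 0 < R) (hre : ∀ z ∈ ball c R, 0 ≤ (p z).re)
    {n : ℕ} (hn : n ≠ 0) :
    ‖iteratedDeriv n p c‖ ≤ 2 * n.factorial * (p c).re / R ^ n := by
  have hbound : ∀ r ∈ Set.Ioo 0 R, ‖iteratedDeriv n p c‖ ≤ 2 * n.factorial * (p c).re / r ^ n :=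
    fun r hr ↦ DiffContOnCl.norm_iteratedDeriv_le_of_re_nonneg
      (hp.diffContOnCl_ball (closedBall_subset_ball hr.2)) hr.1
      (fun z hz ↦ hre z (sphere_subset_ball hr.2 hz)) hn
  have hlim : Tendsto (fun r : ℝ ↦ 2 * n.factorial * (p c).re / r ^ n) (𝓝[<] R)
      (𝓝 (2 * n.factorial * (p c).re / R ^ n)) :=
    ((continuousAt_const.div (continuousAt_id.pow n) (pow_ne_zero n hR.ne')).tendsto).mono_left
      nhdsWithin_le_nhds
  exact ge_of_tendsto hlim (eventually_of_mem (Ioo_mem_nhdsLT hR) hbound)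

theorem re_one_add_two_mul_div_one_sub_nonneg {w : ℂ} (hw : ‖w‖ < 1) :
    0 ≤ (1 + 2 * (w / (1 - w))).re := by
  have hw1 : 1 - w ≠ 0 := fun h ↦ by simp [← sub_eq_zero.1 h] at hw
  have hkernel : 1 + 2 * (w / (1 - w)) = herglotzRieszKernel 0 w 1 := by
    rw [herglotzRieszKernel_def, sub_zero, sub_zero]
    field_simp
    ring
  rw [hkernel, ← Function.comp_apply (f := re), ← poissonKernel_eq_re_herglotzRieszKernel,
    poissonKernel_def]
  simp only [sub_zero, norm_one]
  exact div_nonneg (by nlinarith [norm_nonneg w]) (sq_nonneg _)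

theorem differentiableOn_div_one_sub {φ : ℂ → ℂ} {s : Set ℂ} (hφ : DifferentiableOn ℂ φ s)
    (hφm : ∀ z ∈ s, φ z ∈ ball (0 : ℂ) 1) :
    DifferentiableOn ℂ (fun z ↦ φ z / (1 - φ z)) s :=
  hφ.div (hφ.const_sub 1) fun z hz h ↦ by
    simpa [← sub_eq_zero.1 h] using hφm z hz

theorem norm_iteratedDeriv_div_one_sub_le {φ : ℂ → ℂ} (hφ : DifferentiableOn ℂ φ (ball 0 1))
    (hφ0 : φ 0 = 0) (hφm : ∀ z ∈ ball (0 : ℂ) 1, φ z ∈ ball (0 : ℂ) 1) {n : ℕ} (hn : n ≠ 0) :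
    ‖iteratedDeriv n (fun z ↦ φ z / (1 - φ z)) 0‖ ≤ n.factorial := by
  have hp : DifferentiableOn ℂ (fun z ↦ 1 + 2 * (φ z / (1 - φ z))) (ball 0 1) :=
    ((differentiableOn_div_one_sub hφ hφm).const_mul 2).const_add 1
  have hre : ∀ z ∈ ball (0 : ℂ) 1, 0 ≤ (1 + 2 * (φ z / (1 - φ z))).re := fun z hz ↦
    re_one_add_two_mul_div_one_sub_nonneg (mem_ball_zero_iff.1 (hφm z hz))
  have h := hp.norm_iteratedDeriv_le_of_re_nonneg one_pos hre hn
  rw [iteratedDeriv_const_add (Nat.pos_of_ne_zero hn), iteratedDeriv_const_mul_field, norm_mul,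
    hφ0] at h
  simpa using h

theorem iteratedDeriv_two_cexp_comp {h : ℂ → ℂ} {x : ℂ} (hh : ContDiffAt ℂ 2 h x) :
    iteratedDeriv 2 (fun z ↦ exp (h z)) x = exp (h x) * (deriv h x ^ 2 + iteratedDeriv 2 h x) := by
  rw [← Function.comp_def, iteratedDeriv_comp_two Complex.contDiff_exp.contDiffAt hh,
    iteratedDeriv_eq_iterate, Complex.iter_deriv_exp, Complex.deriv_exp]
  ring

theorem second_coeff_exp_subordination_general (α : ℝ) (hα : 0 < α) (f φ : ℂ → ℂ)
    (hφ : AnalyticOn ℂ φ (Metric.ball (0 : ℂ) 1)) (hφ0 : φ 0 = 0)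
    (hφm : ∀ z ∈ Metric.ball (0 : ℂ) 1, φ z ∈ Metric.ball (0 : ℂ) 1)
    (hsub : ∀ z ∈ Metric.ball (0 : ℂ) 1,
      f z = Complex.exp ((α : ℂ) * φ z / (1 - φ z))) :
    ‖iteratedDeriv 2 f 0 / 2‖ ≤ α * (α + 2) / 2 := by
  set ψ : ℂ → ℂ := fun z ↦ φ z / (1 - φ z)
  have hψ : AnalyticAt ℂ ψ 0 :=
    (differentiableOn_div_one_sub hφ.differentiableOn hφm).analyticAt (ball_mem_nhds 0 one_pos)
  have hf : f =ᶠ[𝓝 0] fun z ↦ exp (α * ψ z) :=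
    eventually_of_mem (ball_mem_nhds 0 one_pos) fun z hz ↦ by rw [hsub z hz, mul_div_assoc]
  have hf'' : iteratedDeriv 2 f 0 = α ^ 2 * deriv ψ 0 ^ 2 + α * iteratedDeriv 2 ψ 0 := by
    have hαψ : ContDiffAt ℂ 2 (fun z ↦ (α : ℂ) * ψ z) 0 :=
      (analyticAt_const.fun_mul hψ).contDiffAt
    rw [hf.iteratedDeriv_eq, iteratedDeriv_two_cexp_comp hαψ, deriv_const_mul_field',
      iteratedDeriv_const_mul_field]
    have hψ0 : ψ 0 = 0 := by simp [ψ, hφ0]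
    rw [hψ0, mul_zero, Complex.exp_zero]
    ring
  have hψ' : ‖deriv ψ 0‖ ≤ 1 := by
    simpa using norm_iteratedDeriv_div_one_sub_le hφ.differentiableOn hφ0 hφm one_ne_zero
  have hψ'' : ‖iteratedDeriv 2 ψ 0‖ ≤ 2 := by
    simpa using norm_iteratedDeriv_div_one_sub_le hφ.differentiableOn hφ0 hφm two_ne_zero
  calc ‖iteratedDeriv 2 f 0 / 2‖
      ≤ (α ^ 2 * ‖deriv ψ 0‖ ^ 2 + α * ‖iteratedDeriv 2 ψ 0‖) / 2 := by
        rw [hf'', norm_div, Complex.norm_ofNat]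
        gcongr
        refine (norm_add_le _ _).trans_eq ?_
        rw [norm_mul, norm_mul, norm_pow, norm_pow, norm_real, Real.norm_of_nonneg hα.le]
    _ ≤ (α ^ 2 * 1 ^ 2 + α * 2) / 2 := by gcongr
    _ = α * (α + 2) / 2 := by ring

/-- If f is analytic in the unit disk, f(0) = 1, and f is subordinate to
F(z) = exp(αz/(1-z)) with α > 0, then |f''(0)/2| ≤ α(α+2)/2. -/
theorem second_coeff_exp_subordination (α : ℝ) (hα : 0 < α) (f φ : ℂ → ℂ)
    (hf : AnalyticOn ℂ f (Metric.ball (0 : ℂ) 1))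
    (hf0 : f 0 = 1)
    (hφ : AnalyticOn ℂ φ (Metric.ball (0 : ℂ) 1)) (hφ0 : φ 0 = 0)
    (hφm : ∀ z ∈ Metric.ball (0 : ℂ) 1, φ z ∈ Metric.ball (0 : ℂ) 1)
    (hsub : ∀ z ∈ Metric.ball (0 : ℂ) 1,
      f z = Complex.exp ((α : ℂ) * φ z / (1 - φ z))) :
    ‖iteratedDeriv 2 f 0 / 2‖ ≤ α * (α + 2) / 2 :=
  second_coeff_exp_subordination_general α hα f φ hφ hφ0 hφm hsub
end

section
/- Let h : 𝔻 → ℂ be analytic with h(0) = 0, h'(0) = 1, h(z) ≠ 0 for z ≠ 0, and suppose h is subordinate to a·Q, where Q(z) = 16z + 128z² + 704z³ + ⋯ is the elliptic modular function (with nonnegative, nondecreasing, convex coefficient sequence) and a ∈ ℂ with a ∈ ∂h(𝔻), |a| = dist(0, ∂h(𝔻)). Then the Taylor coefficients aₙ of h satisfy |aₙ| ≤ |a|·Aₙ for all n ≥ 1, where Aₙ are the coefficients of Q. -/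
/-!
Rogosinski's argument. A nondecreasing convex sequence with `A 0 = 0` is a nonnegative
combination `A k = ∑ δᵢ (k - i)₊` of ramps, and the ramp `(k - i)₊` is, up to order `n`, the
coefficient sequence of `wⁱ⁺¹ Sₙ₋ᵢ(w)²` with `Sₘ(w) = 1 + w + ⋯ + wᵐ⁻¹`. So the polynomial
`Λₙ = ∑ δᵢ wⁱ⁺¹ Sₙ₋ᵢ²` agrees with `Q` up to order `n`, and since `φ 0 = 0` the `n`-th
coefficient of `h = a Q ∘ φ` is that of `a Λₙ ∘ φ`. Cauchy's estimate on `|z| = r` bounds it by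
`|a| ∑ δᵢ · mean |Sₙ₋ᵢ(φ)|² / rⁿ`, and the mean of `|Sₘ(φ)|²` is at most `m`: in
`|1 + φ Sₘ₋₁(φ)|²` the cross term has mean `Re (φ Sₘ₋₁(φ))(0) = 0` and `|φ Sₘ₋₁(φ)| ≤ |Sₘ₋₁(φ)|`.
This gives `|a| Aₙ / rⁿ`; let `r → 1`.
-/

open Complex Metric Real Finset Filter Topology Asymptotics NNReal Polynomial

theorem ContinuousOn.circleIntegrable_of_closedBall {E : Type*} [NormedAddCommGroup E]
    {f : ℂ → E} {c : ℂ} {r : ℝ} (hr : 0 ≤ r) (hf : ContinuousOn f (closedBall c r)) :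
    CircleIntegrable f c r :=
  (hf.mono sphere_subset_closedBall).circleIntegrable hr

section PowerSeries

variable {E : Type*} [NormedAddCommGroup E] [NormedSpace ℂ E] [CompleteSpace E]

theorem HasFPowerSeriesAt.norm_coeff_le_circleAverage {f : ℂ → E}
    {p : FormalMultilinearSeries ℂ ℂ E} {c : ℂ} {r : ℝ} (hp : HasFPowerSeriesAt f p c)
    (hf : DifferentiableOn ℂ f (closedBall c r)) (hr : 0 < r) (n : ℕ) :
    ‖p.coeff n‖ ≤ circleAverage (fun z ↦ ‖f z‖) c r / r ^ n := by
  lift r to ℝ≥0 using hr.le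
  have hcauchy := (hf.hasFPowerSeriesOnBall (mod_cast hr)).hasFPowerSeriesAt
  rw [hp.eq_formalMultilinearSeries hcauchy, ← FormalMultilinearSeries.norm_apply_eq_norm_coef,
    circleAverage_def, smul_eq_mul, div_eq_mul_inv, ← inv_pow]
  simpa using norm_cauchyPowerSeries_le f c r n

theorem HasFPowerSeriesAt.coeff_eq_zero_of_isBigO {f : ℂ → E}
    {p : FormalMultilinearSeries ℂ ℂ E} {c : ℂ} {n : ℕ} (hp : HasFPowerSeriesAt f p c)
    (hf : f =O[𝓝 c] fun z ↦ ‖z - c‖ ^ (n + 1)) : p.coeff n = 0 := by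
  obtain ⟨C, hC⟩ := hf.bound
  obtain ⟨ε, hε, hball⟩ := nhds_basis_closedBall.eventually_iff.1
    (hp.analyticAt.eventually_analyticAt.and hC)
  have hsmall : ∀ r ∈ Set.Ioc 0 ε, ‖p.coeff n‖ ≤ C * r := by
    rintro r ⟨hr, hrε⟩
    have hsub : closedBall c r ⊆ closedBall c ε := closedBall_subset_closedBall hrε
    have hd : DifferentiableOn ℂ f (closedBall c r) :=
      fun z hz ↦ (hball (hsub hz)).1.differentiableAt.differentiableWithinAt
    have hbound : circleAverage (fun z ↦ ‖f z‖) c r ≤ C * r ^ (n + 1) := by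
      refine circleAverage_mono_on_of_le_circle
        (hd.continuousOn.norm.circleIntegrable_of_closedBall hr.le)
        fun z hz ↦ ?_
      rw [abs_of_pos hr] at hz
      have := (hball (hsub (sphere_subset_closedBall hz))).2
      rwa [norm_pow, norm_norm, ← dist_eq_norm, mem_sphere.1 hz] at this
    calc ‖p.coeff n‖ ≤ circleAverage (fun z ↦ ‖f z‖) c r / r ^ n :=
          hp.norm_coeff_le_circleAverage hd hr n
      _ ≤ C * r ^ (n + 1) / r ^ n := by gcongr
      _ = C * r := by field_simp; ring
  have hlim : Tendsto (fun r : ℝ ↦ C * r) (𝓝[>] 0) (𝓝 0) :=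
    tendsto_nhdsWithin_of_tendsto_nhds (by simpa using (continuous_const_mul C).tendsto 0)
  exact norm_le_zero_iff.1 (ge_of_tendsto hlim
    (eventually_of_mem (Ioc_mem_nhdsGT hε) hsmall))

end PowerSeries

theorem Polynomial.isBigO_eval_sub_sum_range_coeff (L : ℂ[X]) (m : ℕ) :
    (fun w ↦ L.eval w - ∑ k ∈ range m, L.coeff k * w ^ k) =O[𝓝 0] fun w ↦ ‖w‖ ^ m := by
  obtain ⟨q, hq⟩ : X ^ m ∣ L - ∑ k ∈ range m, C (L.coeff k) * X ^ k := by
    refine X_pow_dvd_iff.2 fun d hd ↦ ?_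
    simp [finsetSum_coeff, hd]
  have heval (w : ℂ) : L.eval w - ∑ k ∈ range m, L.coeff k * w ^ k = w ^ m * q.eval w := by
    simpa [eval_finsetSum] using congrArg (eval w) hq
  simp only [heval]
  have hq : (fun w ↦ q.eval w) =O[𝓝 0] fun _ ↦ (1 : ℝ) := (q.continuous.tendsto 0).isBigO_one ℝ
  have hpow : (fun w : ℂ ↦ w ^ m) =O[𝓝 0] fun w ↦ ‖w‖ ^ m := by
    simpa using isBigO_norm_right.2 (isBigO_refl (fun w : ℂ ↦ w ^ m) _)
  simpa using hpow.mul hq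

theorem HasFPowerSeriesAt.isBigO_sub_eval {f : ℂ → ℂ} {p : FormalMultilinearSeries ℂ ℂ ℂ}
    (hp : HasFPowerSeriesAt f p 0) {L : ℂ[X]} {n : ℕ} (hL : ∀ k ≤ n, L.coeff k = p.coeff k) :
    (fun w ↦ f w - L.eval w) =O[𝓝 0] fun w ↦ ‖w‖ ^ (n + 1) := by
  have hpartial (w : ℂ) : p.partialSum (n + 1) w = ∑ k ∈ range (n + 1), L.coeff k * w ^ k :=
    sum_congr rfl fun k hk ↦ by
      rw [p.apply_eq_pow_smul_coeff, hL k (mem_range_succ_iff.1 hk), smul_eq_mul, mul_comm]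
  have := (hp.isBigO_sub_partialSum_pow (n + 1)).sub (L.isBigO_eval_sub_sum_range_coeff (n + 1))
  refine this.congr_left fun w ↦ ?_
  simp only [zero_add, hpartial]
  ring

theorem HasFPowerSeriesAt.coeff_eq_of_isBigO_sub_comp {F G φ : ℂ → ℂ}
    {pF pG : FormalMultilinearSeries ℂ ℂ ℂ} {n : ℕ}
    (hpF : HasFPowerSeriesAt (fun z ↦ F (φ z)) pF 0)
    (hpG : HasFPowerSeriesAt (fun z ↦ G (φ z)) pG 0)
    (hFG : (fun w ↦ F w - G w) =O[𝓝 0] fun w ↦ ‖w‖ ^ (n + 1))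
    (hφ : DifferentiableAt ℂ φ 0) (hφ0 : φ 0 = 0) : pF.coeff n = pG.coeff n := by
  have hφO : (fun z ↦ ‖φ z‖ ^ (n + 1)) =O[𝓝 0] fun z ↦ ‖z - 0‖ ^ (n + 1) := by
    have := hφ.hasFDerivAt.isBigO_sub
    simp only [hφ0, sub_zero] at this
    simpa using this.norm_norm.pow (n + 1)
  have hφt : Tendsto φ (𝓝 0) (𝓝 0) := by simpa [hφ0] using hφ.continuousAt.tendsto
  exact sub_eq_zero.1 ((hpF.sub hpG).coeff_eq_zero_of_isBigO ((hFG.comp_tendsto hφt).trans hφO))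

theorem circleAverage_norm_geom_sum_sq_le {φ : ℂ → ℂ} {r : ℝ} (hr : 0 < r)
    (hφ : DifferentiableOn ℂ φ (closedBall 0 r)) (hφ0 : φ 0 = 0)
    (hφ1 : ∀ z ∈ sphere (0 : ℂ) r, ‖φ z‖ ≤ 1) (m : ℕ) :
    circleAverage (fun z ↦ ‖∑ j ∈ range m, φ z ^ j‖ ^ 2) 0 r ≤ m := by
  induction m with
  | zero => simp [circleAverage_const]
  | succ m ih =>
    set S : ℂ → ℂ := fun z ↦ ∑ j ∈ range m, φ z ^ j
    have hS : DifferentiableOn ℂ S (closedBall 0 r) := DifferentiableOn.fun_sum fun j _ ↦ hφ.pow j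
    have hφS : DifferentiableOn ℂ (fun z ↦ φ z * S z) (closedBall 0 r) := hφ.mul hS
    have hsq_int : CircleIntegrable (fun z ↦ ‖φ z * S z‖ ^ 2) 0 r :=
      (hφS.continuousOn.norm.pow 2).circleIntegrable_of_closedBall hr.le
    have hre_cont : ContinuousOn (fun z ↦ 2 * (φ z * S z).re) (closedBall 0 r) :=
      continuousOn_const.mul (continuous_re.comp_continuousOn hφS.continuousOn)
    -- the mean value property kills the cross term, since `φ S` vanishes at the centre
    have cross : circleAverage (fun z ↦ 2 * (φ z * S z).re) 0 r = 0 := by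
      have hcl : DiffContOnCl ℂ (fun z ↦ φ z * S z) (ball 0 |r|) := by
        apply DifferentiableOn.diffContOnCl
        rwa [abs_of_pos hr, closure_ball _ hr.ne']
      have hre : circleAverage (fun z ↦ (φ z * S z).re) 0 r = 0 := by
        rw [show (fun z ↦ (φ z * S z).re) = reCLM ∘ fun z ↦ φ z * S z from rfl,
          reCLM.circleAverage_comp_comm (hφS.continuousOn.circleIntegrable_of_closedBall hr.le),
          hcl.circleAverage]
        simp [hφ0]
      simpa only [smul_eq_mul, hre, mul_zero] using
        circleAverage_fun_smul (a := (2 : ℝ)) (f := fun z ↦ (φ z * S z).re) (c := 0) (R := r)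
    have hsq : circleAverage (fun z ↦ ‖φ z * S z‖ ^ 2) 0 r ≤ m := by
      refine le_trans (circleAverage_mono hsq_int
        ((hS.continuousOn.norm.pow 2).circleIntegrable_of_closedBall hr.le) fun z hz ↦ ?_) ih
      rw [abs_of_pos hr] at hz
      rw [norm_mul]
      exact pow_le_pow_left₀ (by positivity)
        (mul_le_of_le_one_left (norm_nonneg _) (hφ1 z hz)) 2
    have expand (z : ℂ) : ‖∑ j ∈ range (m + 1), φ z ^ j‖ ^ 2
        = ‖φ z * S z‖ ^ 2 + (2 * (φ z * S z).re + 1) := by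
      rw [geom_sum_succ, ← normSq_eq_norm_sq, ← normSq_eq_norm_sq, normSq_add]
      simp only [map_one, mul_one]
      ring
    simp only [expand]
    have hlin_int : CircleIntegrable (fun z ↦ 2 * (φ z * S z).re + 1) 0 r :=
      (hre_cont.add continuousOn_const).circleIntegrable_of_closedBall hr.le
    rw [circleAverage_fun_add hsq_int hlin_int,
      circleAverage_fun_add (hre_cont.circleIntegrable_of_closedBall hr.le)
        (continuousOn_const.circleIntegrable_of_closedBall hr.le),
      circleAverage_const, cross]
    push_cast
    linarith

/-- The weights `δᵢ` of the header. -/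
noncomputable def rampWeight (A : ℕ → ℝ) : ℕ → ℝ
  | 0 => A 1 - A 0
  | i + 1 => A (i + 2) - 2 * A (i + 1) + A i

section rampWeight

variable {A : ℕ → ℝ}

theorem rampWeight_nonneg (hmono : ∀ n, A n ≤ A (n + 1))
    (hconv : ∀ n, A (n + 1) - A n ≤ A (n + 2) - A (n + 1)) (i : ℕ) : 0 ≤ rampWeight A i := by
  cases i with
  | zero => simpa [rampWeight] using hmono 0
  | succ i => simp only [rampWeight]; linarith [hconv i]

theorem sum_range_succ_rampWeight (A : ℕ → ℝ) (k : ℕ) :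
    ∑ i ∈ range (k + 1), rampWeight A i = A (k + 1) - A k := by
  induction k with
  | zero => simp [rampWeight]
  | succ k ih => rw [sum_range_succ, ih, rampWeight]; ring

theorem sum_range_rampWeight_mul_tsub (hA0 : A 0 = 0) (k : ℕ) :
    ∑ i ∈ range k, rampWeight A i * ((k - i : ℕ) : ℝ) = A k := by
  induction k with
  | zero => simp [hA0]
  | succ k ih =>
    have hstep : ∀ i ∈ range (k + 1), rampWeight A i * ((k + 1 - i : ℕ) : ℝ)
        = rampWeight A i * ((k - i : ℕ) : ℝ) + rampWeight A i := fun i hi ↦ by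
      rw [Nat.sub_add_comm (mem_range_succ_iff.1 hi)]; push_cast; ring
    rw [sum_congr rfl hstep, sum_add_distrib, sum_range_succ_rampWeight, sum_range_succ, ih]
    simp

theorem sum_range_rampWeight_mul_tsub_of_le (hA0 : A 0 = 0) {k n : ℕ} (hkn : k ≤ n) :
    ∑ i ∈ range n, rampWeight A i * ((k - i : ℕ) : ℝ) = A k := by
  rw [← sum_subset (range_subset_range.2 hkn), sum_range_rampWeight_mul_tsub hA0]
  intro i _ hi
  simp [Nat.sub_eq_zero_of_le (not_lt.1 (mem_range.not.1 hi))]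

end rampWeight

theorem coeff_geom_sum_sq {m d : ℕ} (hd : d < m) :
    ((∑ j ∈ range m, (X : ℂ[X]) ^ j) ^ 2).coeff d = d + 1 := by
  have hcoeff {k : ℕ} (hk : k < m) : (∑ j ∈ range m, (X : ℂ[X]) ^ j).coeff k = 1 := by
    simp [coeff_X_pow, hk]
  rw [sq, coeff_mul, sum_congr rfl fun x hx ↦ by
    rw [hcoeff (by have := mem_antidiagonal.1 hx; omega),
      hcoeff (by have := mem_antidiagonal.1 hx; omega), one_mul]]
  simp

noncomputable def rampPoly (i m : ℕ) : ℂ[X] := X ^ (i + 1) * (∑ j ∈ range m, X ^ j) ^ 2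

theorem coeff_rampPoly {i m k : ℕ} (hk : k ≤ i + m) :
    (rampPoly i m).coeff k = ((k - i : ℕ) : ℂ) := by
  rw [rampPoly, coeff_X_pow_mul']
  split_ifs with hik
  · rw [coeff_geom_sum_sq (by omega)]
    norm_cast
    omega
  · simp [Nat.sub_eq_zero_of_le (by omega : k ≤ i)]

/-- The polynomial `Λₙ` of the header. -/
noncomputable def majorantPoly (A : ℕ → ℝ) (n : ℕ) : ℂ[X] :=
  ∑ i ∈ range n, C (rampWeight A i : ℂ) * rampPoly i (n - i)

theorem coeff_majorantPoly {A : ℕ → ℝ} (hA0 : A 0 = 0) {k n : ℕ} (hkn : k ≤ n) :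
    (majorantPoly A n).coeff k = A k := by
  rw [majorantPoly, finsetSum_coeff, ← sum_range_rampWeight_mul_tsub_of_le hA0 hkn]
  push_cast
  refine sum_congr rfl fun i hi ↦ ?_
  rw [coeff_C_mul, coeff_rampPoly (by have := mem_range.1 hi; omega)]

section majorantPoly

variable {A : ℕ → ℝ}

theorem norm_eval_majorantPoly_le (hA : ∀ i, 0 ≤ rampWeight A i) {w : ℂ} (hw : ‖w‖ ≤ 1)
    (n : ℕ) :
    ‖(majorantPoly A n).eval w‖ ≤
      ∑ i ∈ range n, rampWeight A i * ‖∑ j ∈ range (n - i), w ^ j‖ ^ 2 := by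
  simp only [majorantPoly, rampPoly, eval_finsetSum, eval_mul, eval_C, eval_pow, eval_X]
  refine (norm_sum_le _ _).trans (sum_le_sum fun i _ ↦ ?_)
  rw [norm_mul, norm_mul, norm_pow, norm_pow, norm_real, Real.norm_of_nonneg (hA i)]
  exact mul_le_mul_of_nonneg_left
    (mul_le_of_le_one_left (by positivity) (pow_le_one₀ (norm_nonneg w) hw)) (hA i)

theorem circleAverage_norm_eval_majorantPoly_le (hA0 : A 0 = 0) (hA : ∀ i, 0 ≤ rampWeight A i)
    {φ : ℂ → ℂ} {r : ℝ} (hr : 0 < r) (hφ : DifferentiableOn ℂ φ (closedBall 0 r))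
    (hφ0 : φ 0 = 0) (hφ1 : ∀ z ∈ sphere (0 : ℂ) r, ‖φ z‖ ≤ 1) (n : ℕ) :
    circleAverage (fun z ↦ ‖(majorantPoly A n).eval (φ z)‖) 0 r ≤ A n := by
  have hcφ := hφ.continuousOn
  calc circleAverage (fun z ↦ ‖(majorantPoly A n).eval (φ z)‖) 0 r
      ≤ circleAverage (fun z ↦ ∑ i ∈ range n,
          rampWeight A i * ‖∑ j ∈ range (n - i), φ z ^ j‖ ^ 2) 0 r := by
        refine circleAverage_mono
          (ContinuousOn.circleIntegrable_of_closedBall hr.le (by fun_prop))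
          (ContinuousOn.circleIntegrable_of_closedBall hr.le (by fun_prop))
          fun z hz ↦ norm_eval_majorantPoly_le hA (hφ1 z ?_) n
        rwa [abs_of_pos hr] at hz
    _ = ∑ i ∈ range n,
          rampWeight A i * circleAverage (fun z ↦ ‖∑ j ∈ range (n - i), φ z ^ j‖ ^ 2) 0 r := by
        rw [circleAverage_fun_sum fun i _ ↦
          ContinuousOn.circleIntegrable_of_closedBall hr.le (by fun_prop)]
        simp_rw [← smul_eq_mul, circleAverage_fun_smul]
    _ ≤ ∑ i ∈ range n, rampWeight A i * ((n - i : ℕ) : ℝ) := by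
        gcongr with i
        · exact hA i
        · exact circleAverage_norm_geom_sum_sq_le hr hφ hφ0 hφ1 _
    _ = A n := sum_range_rampWeight_mul_tsub hA0 n

end majorantPoly

theorem le_of_forall_le_div_pow {x c : ℝ} {n : ℕ} (h : ∀ r ∈ Set.Ioo (0 : ℝ) 1, x ≤ c / r ^ n) :
    x ≤ c := by
  have hlim : Tendsto (fun r : ℝ ↦ c / r ^ n) (𝓝[<] 1) (𝓝 c) := by
    have : ContinuousAt (fun r : ℝ ↦ c / r ^ n) 1 :=
      continuousAt_const.div (continuousAt_id.pow n) (by simp)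
    simpa using this.tendsto.mono_left nhdsWithin_le_nhds
  exact ge_of_tendsto hlim (eventually_of_mem (Ioo_mem_nhdsLT zero_lt_one) h)

theorem coeff_bound_modular_general (h Q φ : ℂ → ℂ)
    (ph pQ : FormalMultilinearSeries ℂ ℂ ℂ) (A : ℕ → ℝ) (a : ℂ)
    (hh : HasFPowerSeriesOnBall h ph 0 1)
    (hQ : HasFPowerSeriesOnBall Q pQ 0 1)
    (hA : ∀ n, pQ.coeff n = (A n : ℂ))
    (hA0 : A 0 = 0)
    (hmono : ∀ n, A n ≤ A (n + 1))
    (hconv : ∀ n, A (n + 1) - A n ≤ A (n + 2) - A (n + 1))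
    (hφ : AnalyticOn ℂ φ (Metric.ball (0 : ℂ) 1)) (hφ0 : φ 0 = 0)
    (hφm : ∀ z ∈ Metric.ball (0 : ℂ) 1, φ z ∈ Metric.ball (0 : ℂ) 1)
    (hsub : ∀ z ∈ Metric.ball (0 : ℂ) 1, h z = a * Q (φ z)) :
    ∀ n : ℕ, 1 ≤ n → ‖ph.coeff n‖ ≤ ‖a‖ * A n := by
  intro n _
  set L := majorantPoly A n
  have hφd : DifferentiableOn ℂ φ (ball 0 1) := hφ.differentiableOn
  obtain ⟨pG, hpG⟩ : AnalyticAt ℂ (fun z ↦ a * L.eval (φ z)) 0 :=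
    ((L.differentiable.comp_differentiableOn hφd).const_mul a).analyticAt
      (ball_mem_nhds 0 one_pos)
  have hpF : HasFPowerSeriesAt (fun z ↦ a * Q (φ z)) ph 0 :=
    hh.hasFPowerSeriesAt.congr (eventually_of_mem (ball_mem_nhds 0 one_pos) hsub)
  have hQL : (fun w ↦ a * Q w - a * L.eval w) =O[𝓝 0] fun w ↦ ‖w‖ ^ (n + 1) :=
    ((hQ.hasFPowerSeriesAt.isBigO_sub_eval fun k hk ↦
      (coeff_majorantPoly hA0 hk).trans (hA k).symm).const_mul_left a).congr_left
      fun w ↦ mul_sub a _ _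
  rw [hpF.coeff_eq_of_isBigO_sub_comp (F := fun w ↦ a * Q w) (G := fun w ↦ a * L.eval w) hpG hQL
    (hφd.differentiableAt (ball_mem_nhds 0 one_pos)) hφ0]
  refine le_of_forall_le_div_pow (n := n) fun r ⟨hr0, hr1⟩ ↦ ?_
  have hφr : DifferentiableOn ℂ φ (closedBall 0 r) := hφd.mono (closedBall_subset_ball hr1)
  have hφ1 (z : ℂ) (hz : z ∈ sphere 0 r) : ‖φ z‖ ≤ 1 :=
    (mem_ball_zero_iff.1 (hφm z (closedBall_subset_ball hr1 (sphere_subset_closedBall hz)))).le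
  calc ‖pG.coeff n‖ ≤ circleAverage (fun z ↦ ‖a * L.eval (φ z)‖) 0 r / r ^ n :=
        hpG.norm_coeff_le_circleAverage
          ((L.differentiable.comp_differentiableOn hφr).const_mul a) hr0 n
    _ = ‖a‖ * circleAverage (fun z ↦ ‖L.eval (φ z)‖) 0 r / r ^ n := by
        simp only [norm_mul, ← smul_eq_mul (a := ‖a‖), circleAverage_fun_smul]
    _ ≤ ‖a‖ * A n / r ^ n := by
        gcongr
        exact circleAverage_norm_eval_majorantPoly_le hA0 (rampWeight_nonneg hmono hconv) hr0
          hφr hφ0 hφ1 n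

/-- If h(z) = z + ⋯ is analytic in 𝔻, vanishes only at 0, and is subordinate
to a·Q where Q has nonnegative, nondecreasing, convex coefficients Aₙ with
A₁ = 16, and a ∈ ∂h(𝔻) with |a| = dist(0, ∂h(𝔻)), then the coefficients of h
satisfy |aₙ| ≤ |a|·Aₙ for n ≥ 1. -/
theorem coeff_bound_modular (h Q φ : ℂ → ℂ)
    (ph pQ : FormalMultilinearSeries ℂ ℂ ℂ) (A : ℕ → ℝ) (a : ℂ)
    (hh : HasFPowerSeriesOnBall h ph 0 1)
    (h0 : h 0 = 0) (h1 : deriv h 0 = 1)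
    (hnz : ∀ z ∈ Metric.ball (0 : ℂ) 1, z ≠ 0 → h z ≠ 0)
    (hQ : HasFPowerSeriesOnBall Q pQ 0 1)
    (hA : ∀ n, pQ.coeff n = (A n : ℂ))
    (hA0 : A 0 = 0) (hA1 : A 1 = 16)
    (hnn : ∀ n, 0 ≤ A n)
    (hmono : ∀ n, A n ≤ A (n + 1))
    (hconv : ∀ n, A (n + 1) - A n ≤ A (n + 2) - A (n + 1))
    (hφ : AnalyticOn ℂ φ (Metric.ball (0 : ℂ) 1)) (hφ0 : φ 0 = 0)
    (hφm : ∀ z ∈ Metric.ball (0 : ℂ) 1, φ z ∈ Metric.ball (0 : ℂ) 1)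
    (hsub : ∀ z ∈ Metric.ball (0 : ℂ) 1, h z = a * Q (φ z))
    (haB : a ∈ frontier (h '' Metric.ball (0 : ℂ) 1))
    (had : ‖a‖ = Metric.infDist 0 (frontier (h '' Metric.ball (0 : ℂ) 1))) :
    ∀ n : ℕ, 1 ≤ n → ‖ph.coeff n‖ ≤ ‖a‖ * A n :=
  coeff_bound_modular_general h Q φ ph pQ A a hh hQ hA hA0 hmono hconv hφ hφ0 hφm hsub
end
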